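/- Let M = (M(α), M(β)) be a Kronecker representation with M(α), M(β) ∈ Mat_{d_2,d_1}(k), and λ ∈ k. For n ≥ 1, dim Hom(R_n(λ), M) = n·d_1 - rank R_n(λ,M), where R_n(λ) = (E_n, J_n(λ)) is the regular indecomposable with parameter λ, and R_n(λ,M) is the n×n lower block bidiagonal matrix with λM(α)-M(β) on the block diagonal and M(α) on the block subdiagonal. -/

import Mathlib

/-!
Vectorizing `X` turns the defining equations of a morphism `(X, Y) : R_n(λ) → M` into one
linear system: `Y = M(α) X` is forced, and `M(β) X = M(α) X J_n(λ)` reads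
`vec (M(α) X J_n(λ) - M(β) X) = 0`. Since `vec (A X B) = (Bᵀ ⊗ A) vec X`, its matrix is
`J_n(λ)ᵀ ⊗ M(α) - E_n ⊗ M(β) = R_n(λ, M)`. So `X ↦ vec X` identifies `Hom(R_n(λ), M)` with the
kernel of `R_n(λ, M)`, and rank–nullity gives the dimension.
-/

/-- The `n × n` Jordan cell with eigenvalue `lam`. -/
def jordanCell {k : Type} [Field k] (n : ℕ) (lam : k) : Matrix (Fin n) (Fin n) k :=
  fun a b => if a = b then lam else if (a : ℕ) + 1 = (b : ℕ) then 1 else 0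

/-- The space of morphisms of Kronecker representations `R_n(lam) → M` where
`R_n(lam) = (E_n, J_n(lam))`: pairs `(X, Y)` with `M(α) X = Y` and
`M(β) X = Y J_n(lam)`. -/
def homFromRegular {k : Type} [Field k] (d1 d2 n : ℕ) (lam : k)
    (Mα Mβ : Matrix (Fin d2) (Fin d1) k) :
    Submodule k (Matrix (Fin d1) (Fin n) k × Matrix (Fin d2) (Fin n) k) where
  carrier := {p | Mα * p.1 = p.2 ∧ Mβ * p.1 = p.2 * jordanCell n lam}
  add_mem' := by
    rintro x y ⟨hx1, hx2⟩ ⟨hy1, hy2⟩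
    constructor <;> simp only [Prod.fst_add, Prod.snd_add, Matrix.mul_add,
      Matrix.add_mul, hx1, hx2, hy1, hy2]
  zero_mem' := by simp
  smul_mem' := by
    rintro c x ⟨hx1, hx2⟩
    constructor <;> simp only [Prod.smul_fst, Prod.smul_snd, Matrix.mul_smul,
      Matrix.smul_mul, hx1, hx2]

/-- The block matrix `R_n(lam, M)`: `n × n` lower block bidiagonal with
`lam • M(α) - M(β)` on the block diagonal and `M(α)` on the block subdiagonal. -/
def regularBlockMat {k : Type} [Field k] (d1 d2 : ℕ) (lam : k)
    (Mα Mβ : Matrix (Fin d2) (Fin d1) k) (n : ℕ) :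
    Matrix (Fin n × Fin d2) (Fin n × Fin d1) k :=
  fun rp cq =>
    if (rp.1 : ℕ) = (cq.1 : ℕ) then lam * Mα rp.2 cq.2 - Mβ rp.2 cq.2
    else if (rp.1 : ℕ) = (cq.1 : ℕ) + 1 then Mα rp.2 cq.2 else 0

open Matrix
open scoped Kronecker

theorem Matrix.rank_add_finrank_ker_mulVecLin {K m n : Type*} [Field K] [Fintype m] [Fintype n]
    (A : Matrix m n K) : A.rank + Module.finrank K (LinearMap.ker A.mulVecLin) = Fintype.card n := by
  rw [rank, LinearMap.finrank_range_add_finrank_ker, Module.finrank_fintype_fun_eq_card]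

section

variable {k : Type} [Field k] {d1 d2 n : ℕ} (lam : k) (Mα Mβ : Matrix (Fin d2) (Fin d1) k)

theorem regularBlockMat_eq_kronecker :
    regularBlockMat d1 d2 lam Mα Mβ n = (jordanCell n lam)ᵀ ⊗ₖ Mα - 1 ⊗ₖ Mβ := by
  ext ⟨j, i⟩ ⟨q, b⟩
  simp only [regularBlockMat, jordanCell, Matrix.sub_apply, kroneckerMap_apply, transpose_apply,
    one_apply, Fin.ext_iff]
  split_ifs <;> first | omega | ring

theorem regularBlockMat_mulVec_vec (X : Matrix (Fin d1) (Fin n) k) :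
    regularBlockMat d1 d2 lam Mα Mβ n *ᵥ vec X = vec (Mα * X * jordanCell n lam - Mβ * X) := by
  rw [regularBlockMat_eq_kronecker, sub_mulVec, kronecker_mulVec_vec, kronecker_mulVec_vec,
    transpose_transpose, transpose_one, Matrix.mul_one, vec_sub]

noncomputable def homFromRegularVec :
    homFromRegular d1 d2 n lam Mα Mβ →ₗ[k] (Fin n × Fin d1 → k) where
  toFun p := vec p.1.1
  map_add' _ _ := rfl
  map_smul' _ _ := rfl

theorem homFromRegularVec_injective :
    Function.Injective (homFromRegularVec (n := n) lam Mα Mβ) := by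
  rintro ⟨⟨X, Y⟩, hY, _⟩ ⟨⟨X', Y'⟩, hY', _⟩ hvec
  obtain rfl : X = X' := vec_inj.mp hvec
  obtain rfl : Y = Y' := hY.symm.trans hY'
  rfl

theorem range_homFromRegularVec :
    LinearMap.range (homFromRegularVec (n := n) lam Mα Mβ)
      = LinearMap.ker (regularBlockMat d1 d2 lam Mα Mβ n).mulVecLin := by
  ext v
  simp only [LinearMap.mem_range, LinearMap.mem_ker, mulVecLin_apply]
  constructor
  · rintro ⟨⟨⟨X, Y⟩, hα, hβ⟩, rfl⟩
    dsimp only at hα hβ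
    change _ *ᵥ vec X = 0
    rw [regularBlockMat_mulVec_vec, hα, hβ, sub_self, vec_zero]
  · intro hv
    set X : Matrix (Fin d1) (Fin n) k := of fun i j => v (j, i)
    have hβ : Mβ * X = Mα * X * jordanCell n lam := by
      rwa [eq_comm, ← sub_eq_zero, ← vec_eq_zero_iff, ← regularBlockMat_mulVec_vec]
    exact ⟨⟨(X, Mα * X), rfl, hβ⟩, rfl⟩

end

theorem dim_hom_from_regular_general {k : Type} [Field k] (d1 d2 : ℕ) (lam : k)
    (Mα Mβ : Matrix (Fin d2) (Fin d1) k) (n : ℕ) :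
    Module.finrank k (homFromRegular d1 d2 n lam Mα Mβ)
      = n * d1 - (regularBlockMat d1 d2 lam Mα Mβ n).rank := by
  have rank_nullity := (regularBlockMat d1 d2 lam Mα Mβ n).rank_add_finrank_ker_mulVecLin
  rw [Fintype.card_prod, Fintype.card_fin, Fintype.card_fin] at rank_nullity
  rw [← LinearMap.finrank_range_of_inj (homFromRegularVec_injective lam Mα Mβ),
    range_homFromRegularVec, ← rank_nullity, Nat.add_sub_cancel_left]

/-- for a Kronecker representation `M = (M(α), M(β))`, `lam ∈ k` and
`n ≥ 1`, `dim Hom(R_n(lam), M) = n d_1 - rank R_n(lam, M)`. -/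
theorem dim_hom_from_regular {k : Type} [Field k] (d1 d2 : ℕ) (lam : k)
    (Mα Mβ : Matrix (Fin d2) (Fin d1) k) (n : ℕ) (hn : 1 ≤ n) :
    Module.finrank k (homFromRegular d1 d2 n lam Mα Mβ)
      = n * d1 - (regularBlockMat d1 d2 lam Mα Mβ n).rank :=
  dim_hom_from_regular_general d1 d2 lam Mα Mβ n
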